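/- arXiv:math/0509310 — 5 statements merged into one kernel-verified Lean document; each statement's English description precedes it below -/
import Mathlib

section
/- Let Φ = {Φ(t)} be a discrete-time Markov chain with transition kernel P satisfying (DV3): log(Pe^V) - V ≤ -δW + b·1_C with V : X → (0,∞], W ≥ 1, δ > 0, b < ∞. Then the process m(t) := exp(V(Φ(t)) + Σ_{s=0}^{t-1} [δW(Φ(s)) - b·1_C(Φ(s))]), t ≥ 0, is a supermartingale with respect to the natural filtration F_t = σ(Φ(s) : 0 ≤ s ≤ t), for any initial condition Φ(0) = x with V(x) < ∞. -/
/-!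
With `U = δ W - b 1_C` write `m(t+1) = S_t · e^{V(Φ(t+1))}` where `S_t = exp (∑_{s ≤ t} U(Φ s))`
is `ℱ_t`-measurable. By the Markov property and (DV3),
`E[m(t+1) | ℱ_t] = S_t · P e^V (Φ t) ≤ S_t · e^{V(Φ t) - U(Φ t)} = m(t)`.
The Markov property is only available for bounded test functions while `e^V` is
unbounded, so the computation is done with lower Lebesgue integrals of truncations and monotone
convergence; the same inequality gives the integrability of `m(t)` by induction on `t`.
-/

open MeasureTheory ProbabilityTheory
open scoped ENNReal

namespace ENNReal

lemma iSup_mul_iSup_of_monotone {f g : ℕ → ℝ≥0∞} (hf : Monotone f) (hg : Monotone g) :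
    (⨆ i, f i) * ⨆ i, g i = ⨆ i, f i * g i := by
  simp_rw [ENNReal.iSup_mul, ENNReal.mul_iSup]
  refine le_antisymm (iSup₂_le fun i j => le_iSup_of_le (max i j) ?_)
    (iSup_le fun i => le_iSup₂_of_le i i le_rfl)
  exact mul_le_mul' (hf (le_max_left i j)) (hg (le_max_right i j))

lemma iSup_min_natCast (a : ℝ≥0∞) : ⨆ n : ℕ, min a n = a := by
  rw [← inf_iSup_eq, ENNReal.iSup_natCast, inf_top_eq]

end ENNReal

namespace ProbabilityTheory.Kernel

lemma norm_integral_le_of_norm_le {α β : Type*} [MeasurableSpace α] [MeasurableSpace β]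
    (κ : Kernel α β) [IsFiniteKernel κ] {g : β → ℝ} {c : ℝ} (hc : 0 ≤ c) (hgc : ∀ y, ‖g y‖ ≤ c)
    (x : α) :
    ‖∫ y, g y ∂(κ x)‖ ≤ c * κ.bound.toReal :=
  (norm_integral_le_of_norm_le_const (ae_of_all _ hgc)).trans <|
    mul_le_mul_of_nonneg_left (ENNReal.toReal_mono κ.bound_ne_top (κ.measure_le_bound x _))
      hc

end ProbabilityTheory.Kernel

section ExpDriftProcess

variable {X Ω : Type*}

/-- The process `m(t)` of the paper, with `U = δ W - b 1_C`. -/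
noncomputable def expDriftProcess (V U : X → ℝ) (Φ : ℕ → Ω → X) (t : ℕ) (ω : Ω) : ℝ :=
  Real.exp (V (Φ t ω) + ∑ s ∈ Finset.range t, U (Φ s ω))

lemma expDriftProcess_succ (V U : X → ℝ) (Φ : ℕ → Ω → X) (t : ℕ) (ω : Ω) :
    expDriftProcess V U Φ (t + 1) ω
      = Real.exp (∑ s ∈ Finset.range (t + 1), U (Φ s ω)) * Real.exp (V (Φ (t + 1) ω)) := by
  rw [expDriftProcess, ← Real.exp_add, add_comm]

lemma expDriftProcess_eq (V U : X → ℝ) (Φ : ℕ → Ω → X) (t : ℕ) (ω : Ω) :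
    expDriftProcess V U Φ t ω
      = Real.exp (∑ s ∈ Finset.range (t + 1), U (Φ s ω))
        * Real.exp (V (Φ t ω) - U (Φ t ω)) := by
  rw [expDriftProcess, ← Real.exp_add, Finset.sum_range_succ]
  ring_nf

end ExpDriftProcess

section MarkovChain

variable {X Ω : Type*} [MeasurableSpace X] {mΩ : MeasurableSpace Ω}

structure IsMarkovChain (μ : Measure Ω) (ℱ : Filtration ℕ mΩ) (P : Kernel X X)
    (Φ : ℕ → Ω → X) : Prop where
  measurable : ∀ t, Measurable[ℱ t] (Φ t)
  condExp_comp_succ : ∀ (t : ℕ) (g : X → ℝ), Measurable g → (∀ y, |g y| ≤ 1) →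
    (μ[fun ω => g (Φ (t + 1) ω)|ℱ t]) =ᵐ[μ] fun ω => ∫ y, g y ∂(P (Φ t ω))

variable {μ : Measure Ω} {ℱ : Filtration ℕ mΩ} {P : Kernel X X} {Φ : ℕ → Ω → X}

namespace IsMarkovChain

lemma measurable_of_le (hΦ : IsMarkovChain μ ℱ P Φ) {s t : ℕ} (hst : s ≤ t) :
    Measurable[ℱ t] (Φ s) :=
  (hΦ.measurable s).mono (ℱ.mono hst) le_rfl

lemma measurable_ambient (hΦ : IsMarkovChain μ ℱ P Φ) (t : ℕ) : Measurable (Φ t) :=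
  (hΦ.measurable t).mono (ℱ.le t) le_rfl

lemma measurable_sum_range (hΦ : IsMarkovChain μ ℱ P Φ) {U : X → ℝ} (hU : Measurable U)
    {n t : ℕ} (hnt : n ≤ t + 1) : Measurable[ℱ t] fun ω => ∑ s ∈ Finset.range n, U (Φ s ω) :=
  Finset.measurable_sum _ fun _ hs =>
    hU.comp (hΦ.measurable_of_le (Nat.lt_succ_iff.mp ((Finset.mem_range.mp hs).trans_le hnt)))

lemma stronglyAdapted_expDriftProcess (hΦ : IsMarkovChain μ ℱ P Φ) {V U : X → ℝ}
    (hV : Measurable V) (hU : Measurable U) : StronglyAdapted ℱ (expDriftProcess V U Φ) :=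
  fun t => ((hV.comp (hΦ.measurable t)).add
    (hΦ.measurable_sum_range hU t.le_succ)).exp.stronglyMeasurable

lemma condExp_comp_succ_of_bdd (hΦ : IsMarkovChain μ ℱ P Φ) (t : ℕ) {g : X → ℝ}
    (hg : Measurable g) {c : ℝ} (hgc : ∀ y, |g y| ≤ c) :
    (μ[fun ω => g (Φ (t + 1) ω)|ℱ t]) =ᵐ[μ] fun ω => ∫ y, g y ∂(P (Φ t ω)) := by
  set k := max c 1
  have hk : 0 < k := lt_max_of_lt_right one_pos
  have hscaled := hΦ.condExp_comp_succ t (fun y => g y / k) (hg.div_const k) fun y => by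
    rw [abs_div, abs_of_pos hk, div_le_one hk]
    exact (hgc y).trans (le_max_left c 1)
  have hrescale : (fun ω => g (Φ (t + 1) ω)) = k • fun ω => g (Φ (t + 1) ω) / k := by
    ext ω
    simp [mul_div_cancel₀ _ hk.ne']
  rw [hrescale]
  filter_upwards [condExp_smul (μ := μ) k (fun ω => g (Φ (t + 1) ω) / k) (ℱ t), hscaled]
    with ω h1 h2
  rw [h1, Pi.smul_apply, h2, integral_div, smul_eq_mul, mul_div_cancel₀ _ hk.ne']

variable [IsFiniteMeasure μ]

lemma setIntegral_mul_comp_succ (hΦ : IsMarkovChain μ ℱ P Φ) {t : ℕ} {F : Ω → ℝ}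
    (hF : StronglyMeasurable[ℱ t] F) (hFint : Integrable F μ) {g : X → ℝ} (hg : Measurable g)
    {c : ℝ} (hgc : ∀ y, |g y| ≤ c) {s : Set Ω} (hs : MeasurableSet[ℱ t] s) :
    ∫ ω in s, F ω * g (Φ (t + 1) ω) ∂μ = ∫ ω in s, F ω * ∫ y, g y ∂(P (Φ t ω)) ∂μ := by
  have hgΦ : Integrable (fun ω => g (Φ (t + 1) ω)) μ :=
    .of_bound (hg.comp (hΦ.measurable_ambient (t + 1))).aestronglyMeasurable c
      (ae_of_all _ fun _ => hgc _)
  have hFg : Integrable (F * fun ω => g (Φ (t + 1) ω)) μ :=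
    hFint.mul_bdd hgΦ.aestronglyMeasurable (ae_of_all _ fun _ => hgc _)
  calc ∫ ω in s, F ω * g (Φ (t + 1) ω) ∂μ
      = ∫ ω in s, (μ[F * fun ω => g (Φ (t + 1) ω)|ℱ t]) ω ∂μ :=
        (setIntegral_condExp (ℱ.le t) hFg hs).symm
    _ = ∫ ω in s, F ω * ∫ y, g y ∂(P (Φ t ω)) ∂μ := by
        refine setIntegral_congr_ae (ℱ.le t s hs) ?_
        filter_upwards [condExp_mul_of_stronglyMeasurable_left hF hFg hgΦ,
          hΦ.condExp_comp_succ_of_bdd t hg hgc] with ω h1 h2 _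
        rw [h1, Pi.mul_apply, h2]

variable [IsFiniteKernel P]

lemma setLIntegral_mul_comp_succ_of_bdd (hΦ : IsMarkovChain μ ℱ P Φ) {t : ℕ} {f : Ω → ℝ≥0∞}
    (hf : Measurable[ℱ t] f) {a : ℝ≥0∞} (ha : a ≠ ∞) (hfa : ∀ ω, f ω ≤ a) {g : X → ℝ≥0∞}
    (hg : Measurable g) {c : ℝ≥0∞} (hc : c ≠ ∞) (hgc : ∀ y, g y ≤ c) {s : Set Ω}
    (hs : MeasurableSet[ℱ t] s) :
    ∫⁻ ω in s, f ω * g (Φ (t + 1) ω) ∂μ = ∫⁻ ω in s, f ω * ∫⁻ y, g y ∂(P (Φ t ω)) ∂μ := by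
  have hf_eq (ω : Ω) : f ω = ENNReal.ofReal (f ω).toReal :=
    (ENNReal.ofReal_toReal (ne_top_of_le_ne_top ha (hfa ω))).symm
  have hg_eq (y : X) : g y = ENNReal.ofReal (g y).toReal :=
    (ENNReal.ofReal_toReal (ne_top_of_le_ne_top hc (hgc y))).symm
  have hgc' (y : X) : |(g y).toReal| ≤ c.toReal := by
    rw [abs_of_nonneg ENNReal.toReal_nonneg]
    exact ENNReal.toReal_mono hc (hgc y)
  have hFint : Integrable (fun ω => (f ω).toReal) μ :=
    .of_bound ((hf.mono (ℱ.le t) le_rfl).ennreal_toReal.aestronglyMeasurable) a.toReal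
      (ae_of_all _ fun ω => by
        rw [Real.norm_eq_abs, abs_of_nonneg ENNReal.toReal_nonneg]
        exact ENNReal.toReal_mono ha (hfa ω))
  have hGint (z : X) : Integrable (fun y => (g y).toReal) (P z) :=
    .of_bound hg.ennreal_toReal.aestronglyMeasurable c.toReal (ae_of_all _ fun y => hgc' y)
  have hPg (z : X) : ∫⁻ y, g y ∂(P z) = ENNReal.ofReal (∫ y, (g y).toReal ∂(P z)) := by
    rw [ofReal_integral_eq_lintegral_ofReal (hGint z) (ae_of_all _ fun _ => ENNReal.toReal_nonneg)]
    simp_rw [← hg_eq]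
  have hKmeas : StronglyMeasurable fun ω => ∫ y, (g y).toReal ∂(P (Φ t ω)) :=
    (hg.ennreal_toReal.stronglyMeasurable.integral_kernel (κ := P)).comp_measurable
      (hΦ.measurable_ambient t)
  have hFK_int : Integrable (fun ω => (f ω).toReal * ∫ y, (g y).toReal ∂(P (Φ t ω))) μ :=
    hFint.mul_bdd hKmeas.aestronglyMeasurable
      (ae_of_all _ fun ω => P.norm_integral_le_of_norm_le ENNReal.toReal_nonneg hgc' (Φ t ω))
  have hFg_int : Integrable (fun ω => (f ω).toReal * (g (Φ (t + 1) ω)).toReal) μ :=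
    hFint.mul_bdd (hg.ennreal_toReal.comp (hΦ.measurable_ambient (t + 1))).aestronglyMeasurable
      (ae_of_all _ fun ω => hgc' _)
  calc ∫⁻ ω in s, f ω * g (Φ (t + 1) ω) ∂μ
      = ∫⁻ ω in s, ENNReal.ofReal ((f ω).toReal * (g (Φ (t + 1) ω)).toReal) ∂μ := by
        simp_rw [ENNReal.ofReal_mul ENNReal.toReal_nonneg, ← hf_eq, ← hg_eq]
    _ = ENNReal.ofReal (∫ ω in s, (f ω).toReal * (g (Φ (t + 1) ω)).toReal ∂μ) := by
        rw [ofReal_integral_eq_lintegral_ofReal hFg_int.restrict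
          (ae_of_all _ fun ω => mul_nonneg ENNReal.toReal_nonneg ENNReal.toReal_nonneg)]
    _ = ENNReal.ofReal (∫ ω in s, (f ω).toReal * ∫ y, (g y).toReal ∂(P (Φ t ω)) ∂μ) := by
        rw [hΦ.setIntegral_mul_comp_succ hf.ennreal_toReal.stronglyMeasurable hFint
          hg.ennreal_toReal hgc' hs]
    _ = ∫⁻ ω in s, f ω * ∫⁻ y, g y ∂(P (Φ t ω)) ∂μ := by
        rw [ofReal_integral_eq_lintegral_ofReal hFK_int.restrict
          (ae_of_all _ fun ω => mul_nonneg ENNReal.toReal_nonneg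
            (integral_nonneg fun _ => ENNReal.toReal_nonneg))]
        simp_rw [ENNReal.ofReal_mul ENNReal.toReal_nonneg, ← hf_eq, hPg]

lemma setLIntegral_mul_comp_succ (hΦ : IsMarkovChain μ ℱ P Φ) {t : ℕ} {f : Ω → ℝ≥0∞}
    (hf : Measurable[ℱ t] f) {g : X → ℝ≥0∞} (hg : Measurable g) {s : Set Ω}
    (hs : MeasurableSet[ℱ t] s) :
    ∫⁻ ω in s, f ω * g (Φ (t + 1) ω) ∂μ = ∫⁻ ω in s, f ω * ∫⁻ y, g y ∂(P (Φ t ω)) ∂μ := by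
  have hmono (a : ℝ≥0∞) : Monotone fun n : ℕ => min a n :=
    fun _ _ hnk => min_le_min_left _ (Nat.cast_le.mpr hnk)
  have hf_meas (n : ℕ) : Measurable fun ω => min (f ω) n :=
    (hf.mono (ℱ.le t) le_rfl).min measurable_const
  have hg_meas (n : ℕ) : Measurable fun y => min (g y) n := hg.min measurable_const
  have hKmono (z : X) : Monotone fun n : ℕ => ∫⁻ y, min (g y) n ∂(P z) :=
    fun _ _ hnk => lintegral_mono fun y => hmono (g y) hnk
  calc ∫⁻ ω in s, f ω * g (Φ (t + 1) ω) ∂μ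
      = ∫⁻ ω in s, ⨆ n : ℕ, min (f ω) n * min (g (Φ (t + 1) ω)) n ∂μ := by
        simp_rw [← ENNReal.iSup_mul_iSup_of_monotone (hmono _) (hmono _),
          ENNReal.iSup_min_natCast]
    _ = ⨆ n : ℕ, ∫⁻ ω in s, min (f ω) n * min (g (Φ (t + 1) ω)) n ∂μ :=
        lintegral_iSup (fun n => (hf_meas n).mul ((hg_meas n).comp (hΦ.measurable_ambient (t + 1))))
          fun _ _ hnk ω => mul_le_mul' (hmono (f ω) hnk) (hmono _ hnk)
    _ = ⨆ n : ℕ, ∫⁻ ω in s, min (f ω) n * ∫⁻ y, min (g y) n ∂(P (Φ t ω)) ∂μ := by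
        congr 1
        ext n
        exact hΦ.setLIntegral_mul_comp_succ_of_bdd (hf.min measurable_const)
          (ENNReal.natCast_ne_top n) (fun _ => min_le_right _ _) (hg_meas n)
          (ENNReal.natCast_ne_top n) (fun _ => min_le_right _ _) hs
    _ = ∫⁻ ω in s, ⨆ n : ℕ, min (f ω) n * ∫⁻ y, min (g y) n ∂(P (Φ t ω)) ∂μ :=
        (lintegral_iSup (fun n => (hf_meas n).mul
          ((hg_meas n).lintegral_kernel.comp (hΦ.measurable_ambient t)))
          fun _ _ hnk ω => mul_le_mul' (hmono (f ω) hnk) (hKmono _ hnk)).symm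
    _ = ∫⁻ ω in s, f ω * ∫⁻ y, g y ∂(P (Φ t ω)) ∂μ := by
        simp_rw [← ENNReal.iSup_mul_iSup_of_monotone (hmono _) (hKmono _),
          ← lintegral_iSup hg_meas (fun _ _ hnk y => hmono (g y) hnk), ENNReal.iSup_min_natCast]

lemma setLIntegral_expDriftProcess_succ_le (hΦ : IsMarkovChain μ ℱ P Φ) {V U : X → ℝ}
    (hV : Measurable V) (hU : Measurable U)
    (hint : ∀ z, Integrable (fun y => Real.exp (V y)) (P z))
    (hdrift : ∀ z, ∫ y, Real.exp (V y) ∂(P z) ≤ Real.exp (V z - U z))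
    (t : ℕ) {s : Set Ω} (hs : MeasurableSet[ℱ t] s) :
    ∫⁻ ω in s, ENNReal.ofReal (expDriftProcess V U Φ (t + 1) ω) ∂μ
      ≤ ∫⁻ ω in s, ENNReal.ofReal (expDriftProcess V U Φ t ω) ∂μ := by
  have hdrift' (z : X) : ∫⁻ y, ENNReal.ofReal (Real.exp (V y)) ∂(P z)
      ≤ ENNReal.ofReal (Real.exp (V z - U z)) := by
    rw [← ofReal_integral_eq_lintegral_ofReal (hint z) (ae_of_all _ fun _ => (Real.exp_pos _).le)]
    exact ENNReal.ofReal_le_ofReal (hdrift z)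
  simp_rw [expDriftProcess_succ, expDriftProcess_eq V U Φ t,
    ENNReal.ofReal_mul (Real.exp_pos _).le]
  rw [hΦ.setLIntegral_mul_comp_succ (hΦ.measurable_sum_range hU le_rfl).exp.ennreal_ofReal
    hV.exp.ennreal_ofReal hs]
  exact lintegral_mono fun ω => mul_le_mul' le_rfl (hdrift' _)

lemma integrable_expDriftProcess (hΦ : IsMarkovChain μ ℱ P Φ) {V U : X → ℝ}
    (hV : Measurable V) (hU : Measurable U)
    (hint : ∀ z, Integrable (fun y => Real.exp (V y)) (P z))
    (hdrift : ∀ z, ∫ y, Real.exp (V y) ∂(P z) ≤ Real.exp (V z - U z))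
    (h0 : Integrable (fun ω => Real.exp (V (Φ 0 ω))) μ) (t : ℕ) :
    Integrable (expDriftProcess V U Φ t) μ := by
  induction t with
  | zero => exact h0.congr (ae_of_all _ fun ω => by simp [expDriftProcess])
  | succ t ih =>
    refine ⟨((hΦ.stronglyAdapted_expDriftProcess hV hU (t + 1)).mono (ℱ.le _)).aestronglyMeasurable,
      (hasFiniteIntegral_iff_ofReal (ae_of_all _ fun _ => (Real.exp_pos _).le)).2 ?_⟩
    have h := hΦ.setLIntegral_expDriftProcess_succ_le hV hU hint hdrift t MeasurableSet.univ
    rw [Measure.restrict_univ] at h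
    exact h.trans_lt ih.lintegral_lt_top

theorem supermartingale_expDriftProcess (hΦ : IsMarkovChain μ ℱ P Φ) {V U : X → ℝ}
    (hV : Measurable V) (hU : Measurable U)
    (hint : ∀ z, Integrable (fun y => Real.exp (V y)) (P z))
    (hdrift : ∀ z, ∫ y, Real.exp (V y) ∂(P z) ≤ Real.exp (V z - U z))
    (h0 : Integrable (fun ω => Real.exp (V (Φ 0 ω))) μ) :
    Supermartingale (expDriftProcess V U Φ) ℱ μ := by
  have hadapted := hΦ.stronglyAdapted_expDriftProcess hV hU
  have hintegrable := hΦ.integrable_expDriftProcess hV hU hint hdrift h0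
  refine supermartingale_of_setIntegral_succ_le hadapted hintegrable fun t s hs => ?_
  have hnonneg (n : ℕ) : 0 ≤ᵐ[μ.restrict s] expDriftProcess V U Φ n :=
    ae_of_all _ fun _ => (Real.exp_pos _).le
  rw [integral_eq_lintegral_of_nonneg_ae (hnonneg _)
      ((hadapted _).mono (ℱ.le _)).aestronglyMeasurable,
    integral_eq_lintegral_of_nonneg_ae (hnonneg _)
      ((hadapted _).mono (ℱ.le _)).aestronglyMeasurable]
  exact ENNReal.toReal_mono (hintegrable t).restrict.lintegral_lt_top.ne
    (hΦ.setLIntegral_expDriftProcess_succ_le hV hU hint hdrift t hs)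

end IsMarkovChain

end MarkovChain

theorem stmt3_general {X : Type*} [MeasurableSpace X]
    {Ω : Type*} {mΩ : MeasurableSpace Ω}
    (μ : Measure Ω) [IsProbabilityMeasure μ]
    (ℱ : Filtration ℕ mΩ)
    (P : Kernel X X) [IsMarkovKernel P]
    (Φ : ℕ → Ω → X)
    (hAdapted : ∀ t, Measurable[ℱ t] (Φ t))
    (x : X) (hx : ∀ ω, Φ 0 ω = x)
    (hMarkov : ∀ (t : ℕ) (g : X → ℝ), Measurable g → (∀ y, |g y| ≤ 1) →
      (μ[fun ω => g (Φ (t + 1) ω)|ℱ t]) =ᵐ[μ] fun ω => ∫ y, g y ∂(P (Φ t ω)))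
    (V W : X → ℝ) (C : Set X) (δ b : ℝ)
    (hVmeas : Measurable V) (hWmeas : Measurable W) (hC : MeasurableSet C)
    (hIntExpV : ∀ z, Integrable (fun y => Real.exp (V y)) (P z))
    (hDV3 : ∀ z, ∫ y, Real.exp (V y) ∂(P z)
        ≤ Real.exp (V z - δ * W z + b * C.indicator (1 : X → ℝ) z)) :
    Supermartingale
      (fun t ω => Real.exp (V (Φ t ω)
        + ∑ s ∈ Finset.range t,
            (δ * W (Φ s ω) - b * C.indicator (1 : X → ℝ) (Φ s ω))))
      ℱ μ := by
  have hU : Measurable fun z => δ * W z - b * C.indicator (1 : X → ℝ) z :=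
    (hWmeas.const_mul δ).sub ((measurable_one.indicator hC).const_mul b)
  have h0 : Integrable (fun ω => Real.exp (V (Φ 0 ω))) μ := by
    simp only [hx, integrable_const]
  exact IsMarkovChain.supermartingale_expDriftProcess ⟨hAdapted, hMarkov⟩ hVmeas hU hIntExpV
    (fun z => (hDV3 z).trans_eq (by ring_nf)) h0

/-- Under (DV3), the process
`m(t) = exp(V(Φ(t)) + Σ_{s<t} [δ W(Φ(s)) − b 1_C(Φ(s))])` is a supermartingale with
respect to the natural filtration of the Markov chain `Φ` started at `x`. -/
theorem stmt3 {X : Type*} [MeasurableSpace X]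
    {Ω : Type*} {mΩ : MeasurableSpace Ω}
    (μ : Measure Ω) [IsProbabilityMeasure μ]
    (ℱ : Filtration ℕ mΩ)
    (P : Kernel X X) [IsMarkovKernel P]
    (Φ : ℕ → Ω → X)
    (hAdapted : ∀ t, Measurable[ℱ t] (Φ t))
    (x : X) (hx : ∀ ω, Φ 0 ω = x)
    (hMarkov : ∀ (t : ℕ) (g : X → ℝ), Measurable g → (∀ y, |g y| ≤ 1) →
      (μ[fun ω => g (Φ (t + 1) ω)|ℱ t]) =ᵐ[μ] fun ω => ∫ y, g y ∂(P (Φ t ω)))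
    (V W : X → ℝ) (C : Set X) (δ b : ℝ)
    (hV : ∀ z, 0 < V z) (hW : ∀ z, 1 ≤ W z) (hδ : 0 < δ)
    (hVmeas : Measurable V) (hWmeas : Measurable W) (hC : MeasurableSet C)
    (hIntExpV : ∀ z, Integrable (fun y => Real.exp (V y)) (P z))
    (hDV3 : ∀ z, ∫ y, Real.exp (V y) ∂(P z)
        ≤ Real.exp (V z - δ * W z + b * C.indicator (1 : X → ℝ) z)) :
    Supermartingale
      (fun t ω => Real.exp (V (Φ t ω)
        + ∑ s ∈ Finset.range t,
            (δ * W (Φ s ω) - b * C.indicator (1 : X → ℝ) (Φ s ω))))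
      ℱ μ :=
  stmt3_general μ ℱ P Φ hAdapted x hx hMarkov V W C δ b hVmeas hWmeas hC hIntExpV hDV3
end

section
/- Consider the one-dimensional Smoluchowski diffusion dX(t) = -u_x(X(t))dt + σ dW(t) with σ > 0 and C² potential u : ℝ → ℝ₊, and set V = 1 + u/σ². Then the continuous-time nonlinear generator satisfies the exact identity H(V) := e^{-V} A e^V = -½σ^{-2} u_x² + ½ u_{xx}, where A = ½σ² d²/dx² - u_x d/dx is the differential generator. Consequently, if lim_{|x|→∞} u(x) = ∞, lim_{|x|→∞} u_x(x)²/|u_{xx}(x)| = ∞ and liminf_{|x|→∞} u_x(x)² > 0, then H(V) ≤ -δW + b·1_C with W = 1 + u_x², some δ > 0, b < ∞, and C a compact (sublevel) set. -/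
/-!
Writing `V = 1 + u/σ²`, the chain rule gives `e^{-V} (e^V)'' = V'' + V'²`, which turns
`e^{-V} A e^V` into `-u_x²/(2σ²) + u_xx/2`. Outside a compact set `u_xx ≤ u_x²/(2σ²)` and
`u_x² ≥ c`, so this is at most `-u_x²/(4σ²) ≤ -δ (1 + u_x²)`; on the compact set the
continuous excess over `-δ (1 + u_x²)` is bounded and absorbed by `b 1_C`.
-/

open Filter

theorem deriv_deriv_exp_comp {V : ℝ → ℝ} (hV : Differentiable ℝ V) {x : ℝ}
    (hV' : DifferentiableAt ℝ (deriv V) x) :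
    deriv (deriv fun y => Real.exp (V y)) x = Real.exp (V x) * (deriv (deriv V) x + deriv V x ^ 2) := by
  have hderiv : deriv (fun y => Real.exp (V y)) = fun y => Real.exp (V y) * deriv V y :=
    funext fun y => (hV y).hasDerivAt.exp.deriv
  have hprod : HasDerivAt (fun y => Real.exp (V y) * deriv V y) _ x :=
    (hV x).hasDerivAt.exp.mul hV'.hasDerivAt
  rw [hderiv, hprod.deriv]
  ring

theorem exp_neg_mul_generator_exp {V : ℝ → ℝ} (hV : Differentiable ℝ V) {x : ℝ}
    (hV' : DifferentiableAt ℝ (deriv V) x) (a b : ℝ) :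
    Real.exp (-V x) * (a * deriv (deriv fun y => Real.exp (V y)) x
        - b * deriv (fun y => Real.exp (V y)) x)
      = a * (deriv (deriv V) x + deriv V x ^ 2) - b * deriv V x := by
  rw [deriv_deriv_exp_comp hV hV', (hV x).hasDerivAt.exp.deriv, Real.exp_neg]
  field_simp

theorem exists_isCompact_le_add_indicator {X : Type*} [TopologicalSpace X] {f g : X → ℝ}
    (hf : Continuous f) (hg : Continuous g) (hfg : ∀ᶠ x in cocompact X, f x ≤ g x) :
    ∃ b : ℝ, ∃ C : Set X, IsCompact C ∧ ∀ x, f x ≤ g x + b * C.indicator 1 x := by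
  obtain ⟨C, hC, hCfg⟩ := hasBasis_cocompact.eventually_iff.mp hfg
  obtain ⟨b, hb⟩ := hC.exists_bound_of_continuousOn (hf.sub hg).continuousOn
  refine ⟨b, C, hC, fun x => ?_⟩
  by_cases hx : x ∈ C
  · have := (abs_le.mp (hb x hx)).2
    simp only [Set.indicator_of_mem hx, Pi.one_apply, Pi.sub_apply] at this ⊢
    linarith
  · simpa [Set.indicator_of_notMem hx] using hCfg hx

theorem neg_div_add_half_le_neg_mul_one_add {s c p q : ℝ} (hs : 0 < s) (hc : 0 < c)
    (hcp : c ≤ p) (hqp : 2 * s * q ≤ p) :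
    -p / (2 * s) + q / 2 ≤ -(c / (4 * s * (1 + c))) * (1 + p) := by
  have hgap : -(c / (4 * s * (1 + c))) * (1 + p) - (-p / (2 * s) + q / 2)
      = ((p - c) + (1 + c) * (p - 2 * s * q)) / (4 * s * (1 + c)) := by
    field_simp
    ring
  have hgap_nonneg : 0 ≤ ((p - c) + (1 + c) * (p - 2 * s * q)) / (4 * s * (1 + c)) := by
    apply div_nonneg _ (by positivity)
    nlinarith
  linarith

theorem stmt5_general (σ : ℝ) (hσ : 0 < σ) (u : ℝ → ℝ)
    (hu : ContDiff ℝ 2 u)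
    (hdom : ∀ M : ℝ, ∀ᶠ x in cocompact ℝ, M * |deriv (deriv u) x| ≤ (deriv u x) ^ 2)
    (hliminf : ∃ c : ℝ, 0 < c ∧ ∀ᶠ x in cocompact ℝ, c ≤ (deriv u x) ^ 2) :
    (∀ x : ℝ,
        Real.exp (-(1 + u x / σ ^ 2))
            * (σ ^ 2 / 2 * deriv (deriv fun y => Real.exp (1 + u y / σ ^ 2)) x
              - deriv u x * deriv (fun y => Real.exp (1 + u y / σ ^ 2)) x)
          = -(deriv u x) ^ 2 / (2 * σ ^ 2) + deriv (deriv u) x / 2)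
    ∧ ∃ δ : ℝ, 0 < δ ∧ ∃ b : ℝ, ∃ C : Set ℝ, IsCompact C ∧
        ∀ x : ℝ,
          Real.exp (-(1 + u x / σ ^ 2))
              * (σ ^ 2 / 2 * deriv (deriv fun y => Real.exp (1 + u y / σ ^ 2)) x
                - deriv u x * deriv (fun y => Real.exp (1 + u y / σ ^ 2)) x)
            ≤ -δ * (1 + (deriv u x) ^ 2) + b * C.indicator (1 : ℝ → ℝ) x := by
  have hu' : ContDiff ℝ 1 (deriv u) := hu.deriv'
  have hV : Differentiable ℝ fun y => 1 + u y / σ ^ 2 :=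
    (hu.differentiable (by norm_num)).div_const _ |>.const_add 1
  have hderivV : deriv (fun y => 1 + u y / σ ^ 2) = fun y => deriv u y / σ ^ 2 := by
    funext y
    simp
  have hid : ∀ x : ℝ,
      Real.exp (-(1 + u x / σ ^ 2))
          * (σ ^ 2 / 2 * deriv (deriv fun y => Real.exp (1 + u y / σ ^ 2)) x
            - deriv u x * deriv (fun y => Real.exp (1 + u y / σ ^ 2)) x)
        = -(deriv u x) ^ 2 / (2 * σ ^ 2) + deriv (deriv u) x / 2 := by
    intro x
    have hV' : DifferentiableAt ℝ (deriv fun y => 1 + u y / σ ^ 2) x := by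
      rw [hderivV]
      exact ((hu'.differentiable (by norm_num)) x).div_const _
    rw [exp_neg_mul_generator_exp hV hV', hderivV, deriv_div_const]
    field_simp
    ring
  refine ⟨hid, ?_⟩
  obtain ⟨c, hc, hcu⟩ := hliminf
  have hev : ∀ᶠ x in cocompact ℝ, -(deriv u x) ^ 2 / (2 * σ ^ 2) + deriv (deriv u) x / 2
      ≤ -(c / (4 * σ ^ 2 * (1 + c))) * (1 + (deriv u x) ^ 2) := by
    filter_upwards [hdom (2 * σ ^ 2), hcu] with x hdomx hcx
    refine neg_div_add_half_le_neg_mul_one_add (by positivity) hc hcx (le_trans ?_ hdomx)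
    exact mul_le_mul_of_nonneg_left (le_abs_self _) (by positivity)
  obtain ⟨b, C, hC, hbC⟩ := exists_isCompact_le_add_indicator
    (by fun_prop (disch := exact hu'.continuous_deriv le_rfl)) (by fun_prop) hev
  exact ⟨_, by positivity, b, C, hC, fun x => (hid x).symm ▸ hbC x⟩

/-- For the Smoluchowski diffusion `dX = -u_x(X) dt + σ dW` with `C²` potential `u ≥ 0`
and `V = 1 + u/σ²`, the nonlinear generator satisfies the exact identity
`H(V) = e^{-V} A e^V = -½σ⁻² u_x² + ½ u_{xx}`; and under the Donsker–Varadhan-type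
growth conditions on `u` one gets the drift `H(V) ≤ -δ W + b 1_C` with `W = 1 + u_x²`
and `C` compact. -/
theorem stmt5 (σ : ℝ) (hσ : 0 < σ) (u : ℝ → ℝ)
    (hu : ContDiff ℝ 2 u) (hu0 : ∀ x, 0 ≤ u x)
    (hcoercive : Tendsto u (cocompact ℝ) atTop)
    (hdom : ∀ M : ℝ, ∀ᶠ x in cocompact ℝ, M * |deriv (deriv u) x| ≤ (deriv u x) ^ 2)
    (hliminf : ∃ c : ℝ, 0 < c ∧ ∀ᶠ x in cocompact ℝ, c ≤ (deriv u x) ^ 2) :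
    (∀ x : ℝ,
        Real.exp (-(1 + u x / σ ^ 2))
            * (σ ^ 2 / 2 * deriv (deriv fun y => Real.exp (1 + u y / σ ^ 2)) x
              - deriv u x * deriv (fun y => Real.exp (1 + u y / σ ^ 2)) x)
          = -(deriv u x) ^ 2 / (2 * σ ^ 2) + deriv (deriv u) x / 2)
    ∧ ∃ δ : ℝ, 0 < δ ∧ ∃ b : ℝ, ∃ C : Set ℝ, IsCompact C ∧
        ∀ x : ℝ,
          Real.exp (-(1 + u x / σ ^ 2))
              * (σ ^ 2 / 2 * deriv (deriv fun y => Real.exp (1 + u y / σ ^ 2)) x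
                - deriv u x * deriv (fun y => Real.exp (1 + u y / σ ^ 2)) x)
            ≤ -δ * (1 + (deriv u x) ^ 2) + b * C.indicator (1 : ℝ → ℝ) x :=
  stmt5_general σ hσ u hu hdom hliminf
end

section
/- Let P̂ be a positive kernel on (X,B) and suppose there exists a measure μ with ∫ v dμ < ∞ such that P̂(x,A) ≤ μ(A) for all x∈X, A∈B. Then P̂² is v-separable: for every ε > 0 there exists a finite-rank kernel K_ε = Σ_{i=1}^n s_i ⊗ ν_i with s_i ∈ L∞^v, ν_i finite measures with ∫v dν_i < ∞, such that the induced operator norm ⦀P̂² − K_ε⦀_v ≤ ε. -/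
/-!
Since `P̂(x, ·) ≤ μ`, the bivariate measure `μ ⊗ P̂` is dominated by `μ × μ` and so has a density
`r ≤ 1`; for each test function this gives `P̂ g (y) = ∫ r(y, z) g(z) μ(dz)` for `μ`-a.e. `y`.
Measurable rectangles form a semiring generating the product σ-algebra, so `r` can be approximated
in `L¹(μ × v μ)` by a combination `k = ∑ cᵢ 1_{Aᵢ × Bᵢ}`. Integrating once more against
`P̂(x, ·) ≤ μ` replaces `P̂² g (x)` by `∑ cᵢ P̂(x, Aᵢ) ∫_{Bᵢ} g dμ`, with an error bounded by the
`L¹(μ × v μ)` distance of `r` and `k`, uniformly in `x` and in `g` with `|g| ≤ v`.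
-/

open MeasureTheory ProbabilityTheory Set
open scoped ENNReal

section

variable {α β : Type*} [MeasurableSpace α] [MeasurableSpace β]

variable (α β) in
def measurableRectangles : Set (Set (α × β)) :=
  image2 (· ×ˢ ·) {s : Set α | MeasurableSet s} {t : Set β | MeasurableSet t}

theorem isSetSemiring_measurableRectangles : IsSetSemiring (measurableRectangles α β) where
  empty_mem := ⟨∅, .empty, ∅, .empty, prod_empty⟩
  inter_mem := by
    rintro _ ⟨A, hA, B, hB, rfl⟩ _ ⟨C, hC, D, hD, rfl⟩
    exact ⟨A ∩ C, hA.inter hC, B ∩ D, hB.inter hD, prod_inter_prod.symm⟩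
  sdiff_eq_sUnion' := by
    classical
    rintro _ ⟨A, hA, B, hB, rfl⟩ _ ⟨C, hC, D, hD, rfl⟩
    refine ⟨{(A \ C) ×ˢ B, (A ∩ C) ×ˢ (B \ D)}, ?_, ?_, ?_⟩
    · simp only [Finset.coe_insert, Finset.coe_singleton, insert_subset_iff,
        singleton_subset_iff]
      exact ⟨mem_image2_of_mem (hA.diff hC) hB, mem_image2_of_mem (hA.inter hC) (hB.diff hD)⟩
    · simp only [Finset.coe_insert, Finset.coe_singleton]
      refine pairwise_pair.2 fun _ => ⟨?_, ?_⟩ <;>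
        simp only [Function.onFun, id, disjoint_prod] <;> left
      exacts [disjoint_sdiff_left.mono_right inter_subset_right,
        disjoint_sdiff_right.mono_left inter_subset_right]
    · ext ⟨x, y⟩
      simp only [Finset.coe_insert, Finset.coe_singleton, sUnion_insert, sUnion_singleton,
        mem_union, mem_sdiff, mem_prod, mem_inter_iff]
      tauto

variable (α β) in
def rectangleSpan : Submodule ℝ (α × β → ℝ) :=
  Submodule.span ℝ {f | ∃ A B, MeasurableSet A ∧ MeasurableSet B ∧ f = (A ×ˢ B).indicator 1}

theorem measurable_of_mem_rectangleSpan {k : α × β → ℝ} (hk : k ∈ rectangleSpan α β) :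
    Measurable k := by
  induction hk using Submodule.span_induction with
  | mem f hf =>
    obtain ⟨A, B, hA, hB, rfl⟩ := hf
    exact measurable_one.indicator (hA.prod hB)
  | zero => exact measurable_zero
  | add f g _ _ hf hg => exact hf.add hg
  | smul c f _ hf => exact hf.const_smul c

theorem indicator_mem_rectangleSpan {t : Set (α × β)}
    (ht : t ∈ supClosure (measurableRectangles α β)) :
    t.indicator 1 ∈ rectangleSpan α β := by
  obtain ⟨P, hP⟩ := isSetSemiring_measurableRectangles.mem_supClosure_iff.1 ht
  have ht : t = ⋃ u ∈ P.parts, id u := by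
    conv_lhs => rw [← P.sup_parts, Finset.sup_id_set_eq_sUnion, sUnion_eq_biUnion]
    rfl
  rw [ht, Finset.indicator_biUnion _ _ P.disjoint, ← Finset.sum_fn]
  refine Submodule.sum_mem (rectangleSpan α β) fun u hu => Submodule.subset_span ?_
  obtain ⟨A, hA, B, hB, rfl⟩ := hP hu
  exact ⟨A, B, hA, hB, rfl⟩

theorem MeasureTheory.MemLp.exists_mem_rectangleSpan_eLpNorm_sub_le {ρ : Measure (α × β)}
    [IsFiniteMeasure ρ] {p : ℝ≥0∞} (hp : p ≠ ∞) {f : α × β → ℝ} (hf : MemLp f p ρ) {ε : ℝ≥0∞}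
    (hε : ε ≠ 0) :
    ∃ k ∈ rectangleSpan α β, eLpNorm (f - k) p ρ ≤ ε := by
  refine (hf.induction_dense hp (· ∈ rectangleSpan α β) (fun c s hs _ δ hδ => ?_)
    (fun _ _ => add_mem) (fun _ hk => (measurable_of_mem_rectangleSpan hk).aestronglyMeasurable)
    hε).imp fun _ => And.symm
  obtain ⟨η, hη, hηδ⟩ := exists_eLpNorm_indicator_le (μ := ρ) hp c hδ
  have hcover : ∃ D, D.Countable ∧ D ⊆ measurableRectangles α β ∧ ρ (⋃₀ D)ᶜ = 0 :=
    ⟨{univ}, countable_singleton _,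
      singleton_subset_iff.2 ⟨univ, .univ, univ, .univ, univ_prod_univ⟩, by simp⟩
  obtain ⟨t, ht, hts⟩ := exists_measure_symmDiff_lt_of_generateFrom_isSetSemiring
    isSetSemiring_measurableRectangles hcover generateFrom_prod.symm hs (ENNReal.coe_pos.2 hη)
  refine ⟨t.indicator fun _ => c, ?_, ?_⟩
  · rw [eLpNorm_indicator_sub_indicator]
    exact hηδ _ hts.le
  · convert Submodule.smul_mem _ c (indicator_mem_rectangleSpan ht) using 1
    ext x
    by_cases hx : x ∈ t <;> simp [hx]

theorem exists_eq_sum_of_mem_rectangleSpan {k : α × β → ℝ} (hk : k ∈ rectangleSpan α β) :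
    ∃ (n : ℕ) (c : Fin n → ℝ) (A : Fin n → Set α) (B : Fin n → Set β),
      (∀ i, MeasurableSet (A i)) ∧ (∀ i, MeasurableSet (B i)) ∧
      k = ∑ i, c i • (A i ×ˢ B i).indicator 1 := by
  obtain ⟨n, c, f, rfl⟩ := Submodule.mem_span_set'.1 hk
  choose A B hA hB hf using fun i => (f i).2
  exact ⟨n, c, A, B, hA, hB, by simp_rw [← hf]⟩

theorem exists_norm_le_of_mem_rectangleSpan {k : α × β → ℝ} (hk : k ∈ rectangleSpan α β) :
    ∃ C, ∀ p, ‖k p‖ ≤ C := by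
  induction hk using Submodule.span_induction with
  | mem f hf =>
    obtain ⟨A, B, -, -, rfl⟩ := hf
    exact ⟨1, fun p => (norm_indicator_le_norm_self _ p).trans_eq norm_one⟩
  | zero => exact ⟨0, fun p => by simp⟩
  | add f g _ _ hf hg =>
    obtain ⟨C, hC⟩ := hf
    obtain ⟨D, hD⟩ := hg
    exact ⟨C + D, fun p => (norm_add_le _ _).trans (add_le_add (hC p) (hD p))⟩
  | smul c f _ hf =>
    obtain ⟨C, hC⟩ := hf
    exact ⟨‖c‖ * C, fun p => by rw [Pi.smul_apply, norm_smul]; gcongr; exact hC p⟩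

theorem ENNReal.norm_toReal_le_one {x : ℝ≥0∞} (hx : x ≤ 1) : ‖x.toReal‖ ≤ 1 := by
  simpa using ENNReal.toReal_mono ENNReal.one_ne_top hx

theorem MeasureTheory.Measure.exists_eq_withDensity_le_one_of_le {m m' : Measure α}
    [SigmaFinite m'] (h : m ≤ m') :
    ∃ r : α → ℝ≥0∞, Measurable r ∧ (∀ x, r x ≤ 1) ∧ m = m'.withDensity r := by
  have : SigmaFinite m := Measure.sigmaFinite_of_le m' h
  refine ⟨fun x => min (m.rnDeriv m' x) 1, (m.measurable_rnDeriv m').min measurable_const,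
    fun x => min_le_right _ _, ?_⟩
  have hmin : m.rnDeriv m' =ᵐ[m'] fun x => min (m.rnDeriv m' x) 1 := by
    filter_upwards [Measure.rnDeriv_le_one_of_le h] with x hx using (min_eq_left hx).symm
  rw [← withDensity_congr_ae hmin,
    Measure.withDensity_rnDeriv_eq _ _ (Measure.absolutelyContinuous_of_le h)]

theorem MeasureTheory.Measure.compProd_le_prod {μ : Measure α} {ν : Measure β} {κ : Kernel α β}
    [SFinite μ] [SFinite ν] [IsSFiniteKernel κ] (h : ∀ a, κ a ≤ ν) : μ ⊗ₘ κ ≤ μ.prod ν := by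
  refine Measure.le_iff.2 fun s hs => ?_
  rw [Measure.compProd_apply hs, Measure.prod_apply hs]
  exact lintegral_mono fun a => h a _

section

variable {μ : Measure α} {ν : Measure β} {κ : Kernel α β}

theorem ae_lintegral_kernel_eq_lintegral_mul [SigmaFinite μ] [SFinite ν] [IsSFiniteKernel κ]
    {r : α × β → ℝ≥0∞} (hr : Measurable r) (h : μ ⊗ₘ κ = (μ.prod ν).withDensity r)
    {G : β → ℝ≥0∞} (hG : Measurable G) :
    ∀ᵐ a ∂μ, ∫⁻ b, G b ∂κ a = ∫⁻ b, r (a, b) * G b ∂ν := by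
  have hG₂ : Measurable fun p : α × β => G p.2 := hG.comp measurable_snd
  refine ae_eq_of_forall_setLIntegral_eq_of_sigmaFinite ?_ ?_ fun s hs _ => ?_
  · exact hG₂.lintegral_kernel_prod_right'
  · exact (hr.mul hG₂).lintegral_prod_right'
  calc ∫⁻ a in s, ∫⁻ b, G b ∂κ a ∂μ
      = ∫⁻ p in s ×ˢ univ, G p.2 ∂(μ ⊗ₘ κ) := by
        rw [Measure.setLIntegral_compProd hG₂ hs .univ]
        simp only [Measure.restrict_univ]
    _ = ∫⁻ p in s ×ˢ univ, r p * G p.2 ∂μ.prod ν := by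
        rw [h, setLIntegral_withDensity_eq_setLIntegral_mul _ hr hG₂ (hs.prod .univ)]
        rfl
    _ = ∫⁻ a in s, ∫⁻ b, r (a, b) * G b ∂ν ∂μ := by
        rw [← Measure.prod_restrict, Measure.restrict_univ,
          lintegral_prod (fun p => r p * G p.2) (hr.mul hG₂).aemeasurable]

theorem ae_integral_kernel_eq_integral_mul [SigmaFinite μ] [SFinite ν] [IsSFiniteKernel κ]
    {r : α × β → ℝ≥0∞} (hr : Measurable r) (hr_le : ∀ p, r p ≤ 1)
    (h : μ ⊗ₘ κ = (μ.prod ν).withDensity r)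
    {g : β → ℝ} (hg : Measurable g) (hgκ : ∀ a, Integrable g (κ a)) (hgν : Integrable g ν) :
    ∀ᵐ a ∂μ, ∫ b, g b ∂κ a = ∫ b, (r (a, b)).toReal * g b ∂ν := by
  have hgpos : Measurable fun b => ENNReal.ofReal (g b) := hg.ennreal_ofReal
  have hgneg : Measurable fun b => ENNReal.ofReal (-g b) := hg.neg.ennreal_ofReal
  filter_upwards [ae_lintegral_kernel_eq_lintegral_mul hr h hgpos,
    ae_lintegral_kernel_eq_lintegral_mul hr h hgneg] with a hpos hneg
  have hra : Measurable fun b => r (a, b) := hr.comp measurable_prodMk_left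
  have hle : ν.withDensity (fun b => r (a, b)) ≤ ν := by
    simpa using withDensity_mono (μ := ν) (ae_of_all _ fun b => hr_le (a, b))
  change _ = ∫ b, (r (a, b)).toReal • g b ∂ν
  rw [← integral_withDensity_eq_integral_toReal_smul hra
      (ae_of_all _ fun b => (hr_le (a, b)).trans_lt ENNReal.one_lt_top),
    integral_eq_lintegral_pos_part_sub_lintegral_neg_part (hgκ a),
    integral_eq_lintegral_pos_part_sub_lintegral_neg_part (hgν.mono_measure hle),
    lintegral_withDensity_eq_lintegral_mul _ hra hgpos,
    lintegral_withDensity_eq_lintegral_mul _ hra hgneg, hpos, hneg]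
  rfl

end

theorem lintegral_enorm_mul_le_eLpNorm_prod_withDensity {μ : Measure α} {ν : Measure β}
    [SFinite μ] [SFinite ν] {g : β → ℝ} {w : β → ℝ≥0∞} (hw : Measurable w)
    (hgw : ∀ b, ‖g b‖ₑ ≤ w b) {f : α × β → ℝ} (hf : Measurable f) :
    ∫⁻ p, ‖g p.2‖ₑ * ‖f p‖ₑ ∂μ.prod ν ≤ eLpNorm f 1 (μ.prod (ν.withDensity w)) := by
  have hw₂ : Measurable fun p : α × β => w p.2 := hw.comp measurable_snd
  rw [eLpNorm_one_eq_lintegral_enorm, prod_withDensity_right hw,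
    lintegral_withDensity_eq_lintegral_mul _ hw₂ hf.enorm]
  exact lintegral_mono fun p => mul_le_mul_left (hgw p.2) ‖f p‖ₑ

section

variable {m μ : Measure α} {ν : Measure β} {g : β → ℝ}

theorem integrable_integral_mul_of_norm_le [IsFiniteMeasure m] [SFinite ν] {φ : α × β → ℝ}
    (hφ : Measurable φ) {C : ℝ} (hφC : ∀ p, ‖φ p‖ ≤ C) (hg : Measurable g)
    (hgν : Integrable g ν) :
    Integrable (fun a => ∫ b, φ (a, b) * g b ∂ν) m := by
  refine .of_bound ?_ (C * ∫ b, ‖g b‖ ∂ν) (ae_of_all _ fun a => ?_)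
  · exact (hφ.mul (hg.comp measurable_snd)).stronglyMeasurable.integral_prod_right'
      |>.aestronglyMeasurable
  · rw [← integral_const_mul]
    refine norm_integral_le_of_norm_le (hgν.norm.const_mul C) (ae_of_all _ fun b => ?_)
    rw [norm_mul]
    exact mul_le_mul_of_nonneg_right (hφC _) (norm_nonneg _)

theorem enorm_integral_kernel_sub_integral_mul_le [IsFiniteMeasure μ] [SFinite ν]
    {κ : Kernel α β} [IsSFiniteKernel κ] (hm : m ≤ μ)
    {r : α × β → ℝ≥0∞} (hr : Measurable r) (hr_le : ∀ p, r p ≤ 1)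
    (h : μ ⊗ₘ κ = (μ.prod ν).withDensity r)
    {k : α × β → ℝ} (hk : Measurable k) {C : ℝ} (hkC : ∀ p, ‖k p‖ ≤ C)
    (hg : Measurable g) (hgκ : ∀ a, Integrable g (κ a)) (hgν : Integrable g ν) :
    ‖∫ a, ∫ b, g b ∂κ a ∂m - ∫ a, ∫ b, k (a, b) * g b ∂ν ∂m‖ₑ ≤
      ∫⁻ p, ‖g p.2‖ₑ * ‖(r p).toReal - k p‖ₑ ∂μ.prod ν := by
  have : IsFiniteMeasure m := isFiniteMeasure_of_le μ hm
  have hr' : Measurable fun p => (r p).toReal := hr.ennreal_toReal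
  have hr'C : ∀ p, ‖(r p).toReal‖ ≤ 1 := fun p => ENNReal.norm_toReal_le_one (hr_le p)
  have hint : ∀ {φ : α × β → ℝ} {D : ℝ}, Measurable φ → (∀ p, ‖φ p‖ ≤ D) → ∀ a,
      Integrable (fun b => φ (a, b) * g b) ν := fun hφ hφD a =>
    hgν.bdd_mul (hφ.comp measurable_prodMk_left).aestronglyMeasurable (ae_of_all _ fun _ => hφD _)
  have hR := ae_integral_kernel_eq_integral_mul hr hr_le h hg hgκ hgν
  have hRm : Integrable (fun a => ∫ b, (r (a, b)).toReal * g b ∂ν) m :=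
    integrable_integral_mul_of_norm_le hr' hr'C hg hgν
  have hF : Integrable (fun a => ∫ b, g b ∂κ a) m :=
    hRm.congr (Measure.absolutelyContinuous_of_le hm (Filter.EventuallyEq.symm hR))
  calc ‖∫ a, ∫ b, g b ∂κ a ∂m - ∫ a, ∫ b, k (a, b) * g b ∂ν ∂m‖ₑ
      = ‖∫ a, (∫ b, g b ∂κ a - ∫ b, k (a, b) * g b ∂ν) ∂m‖ₑ := by
        rw [integral_sub hF (integrable_integral_mul_of_norm_le hk hkC hg hgν)]
    _ ≤ ∫⁻ a, ‖∫ b, g b ∂κ a - ∫ b, k (a, b) * g b ∂ν‖ₑ ∂m := enorm_integral_le_lintegral_enorm _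
    _ ≤ ∫⁻ a, ‖∫ b, g b ∂κ a - ∫ b, k (a, b) * g b ∂ν‖ₑ ∂μ := lintegral_mono' hm le_rfl
    _ = ∫⁻ a, ‖∫ b, ((r (a, b)).toReal - k (a, b)) * g b ∂ν‖ₑ ∂μ := by
        refine lintegral_congr_ae (hR.mono fun a ha => ?_)
        simp only [ha, sub_mul]
        rw [integral_sub (hint hr' hr'C a) (hint hk hkC a)]
    _ ≤ ∫⁻ a, ∫⁻ b, ‖g b‖ₑ * ‖(r (a, b)).toReal - k (a, b)‖ₑ ∂ν ∂μ := by
        gcongr with a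
        refine (enorm_integral_le_lintegral_enorm _).trans_eq (lintegral_congr fun b => ?_)
        rw [enorm_mul, mul_comm]
    _ = ∫⁻ p, ‖g p.2‖ₑ * ‖(r p).toReal - k p‖ₑ ∂μ.prod ν :=
        (lintegral_prod _ ((hg.comp measurable_snd).enorm.mul (hr'.sub hk).enorm).aemeasurable).symm

theorem integral_integral_sum_indicator_mul [IsFiniteMeasure m] {n : ℕ} (c : Fin n → ℝ)
    {A : Fin n → Set α} {B : Fin n → Set β} (hA : ∀ i, MeasurableSet (A i))
    (hB : ∀ i, MeasurableSet (B i)) (hgν : Integrable g ν) :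
    ∫ a, ∫ b, (∑ i, c i • (A i ×ˢ B i).indicator 1) (a, b) * g b ∂ν ∂m =
      ∑ i, c i * m.real (A i) * ∫ b in B i, g b ∂ν := by
  have hinner : ∀ a, ∫ b, (∑ i, c i • (A i ×ˢ B i).indicator 1) (a, b) * g b ∂ν =
      ∑ i, (A i).indicator 1 a * (c i * ∫ b in B i, g b ∂ν) := by
    intro a
    have hpt : ∀ b, (∑ i, c i • (A i ×ˢ B i).indicator 1) (a, b) * g b =
        ∑ i, (c i * (A i).indicator 1 a) * (B i).indicator g b := by
      intro b
      simp only [Finset.sum_apply, Pi.smul_apply, smul_eq_mul, Finset.sum_mul,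
        indicator_prod_one]
      refine Finset.sum_congr rfl fun i _ => ?_
      by_cases hb : b ∈ B i <;> simp [hb, mul_assoc]
    simp only [hpt]
    rw [integral_finsetSum _ fun i _ => (hgν.indicator (hB i)).const_mul _]
    refine Finset.sum_congr rfl fun i _ => ?_
    rw [integral_const_mul, integral_indicator (hB i)]
    ring
  simp only [hinner]
  rw [integral_finsetSum _ fun i _ => ((integrable_const 1).indicator (hA i)).mul_const _]
  refine Finset.sum_congr rfl fun i _ => ?_
  rw [integral_mul_const, integral_indicator_one (hA i)]
  ring

theorem exists_abs_integral_kernel_sub_sum_le [IsFiniteMeasure μ] [SigmaFinite ν]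
    {κ : Kernel α β} [IsSFiniteKernel κ] (hκ : ∀ a, κ a ≤ ν) {w : β → ℝ≥0∞} (hw : Measurable w)
    (hwν : ∫⁻ b, w b ∂ν ≠ ∞) {ε : ℝ} (hε : 0 < ε) :
    ∃ (n : ℕ) (c : Fin n → ℝ) (A : Fin n → Set α) (B : Fin n → Set β),
      (∀ i, MeasurableSet (A i)) ∧ (∀ i, MeasurableSet (B i)) ∧
      ∀ g : β → ℝ, Measurable g → (∀ b, ‖g b‖ₑ ≤ w b) → ∀ m ≤ μ,
        |∫ a, ∫ b, g b ∂κ a ∂m - ∑ i, c i * m.real (A i) * ∫ b in B i, g b ∂ν| ≤ ε := by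
  obtain ⟨r, hr, hr_le, hΓ⟩ :=
    Measure.exists_eq_withDensity_le_one_of_le (Measure.compProd_le_prod (μ := μ) hκ)
  have : IsFiniteMeasure (ν.withDensity w) := isFiniteMeasure_withDensity hwν
  have hrL1 : MemLp (fun p => (r p).toReal) 1 (μ.prod (ν.withDensity w)) :=
    .of_bound hr.ennreal_toReal.aestronglyMeasurable 1
      (ae_of_all _ fun p => ENNReal.norm_toReal_le_one (hr_le p))
  obtain ⟨k, hk, hrk⟩ :=
    hrL1.exists_mem_rectangleSpan_eLpNorm_sub_le ENNReal.one_ne_top (ENNReal.ofReal_pos.2 hε).ne'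
  obtain ⟨C, hC⟩ := exists_norm_le_of_mem_rectangleSpan hk
  have hkm := measurable_of_mem_rectangleSpan hk
  obtain ⟨n, c, A, B, hA, hB, rfl⟩ := exists_eq_sum_of_mem_rectangleSpan hk
  refine ⟨n, c, A, B, hA, hB, fun g hg hgw m hm => ?_⟩
  have : IsFiniteMeasure m := isFiniteMeasure_of_le μ hm
  have hgν : Integrable g ν := ⟨hg.aestronglyMeasurable, (lintegral_mono hgw).trans_lt hwν.lt_top⟩
  have key := (enorm_integral_kernel_sub_integral_mul_le hm hr hr_le hΓ hkm hC hg
    (fun a => hgν.mono_measure (hκ a)) hgν).trans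
    ((lintegral_enorm_mul_le_eLpNorm_prod_withDensity hw hgw (hr.ennreal_toReal.sub hkm)).trans hrk)
  rwa [integral_integral_sum_indicator_mul c hA hB hgν, Real.enorm_eq_ofReal_abs,
    ENNReal.ofReal_le_ofReal_iff hε.le] at key

end

end

/-- If a positive kernel `P̂` is dominated by a fixed measure `μ` with `∫ v dμ < ∞`,
then `P̂²` is `v`-separable: it can be approximated in the induced `v`-operator norm
by finite-rank kernels `Σᵢ sᵢ ⊗ νᵢ`. -/
theorem stmt8 {X : Type*} [MeasurableSpace X]
    (v : X → ℝ) (hv : ∀ x, 1 ≤ v x) (hvmeas : Measurable v)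
    (Phat : X → Measure X)
    (hPmeas : ∀ A : Set X, MeasurableSet A → Measurable fun x => Phat x A)
    (μ : Measure X)
    (hdom : ∀ x (A : Set X), MeasurableSet A → Phat x A ≤ μ A)
    (hμv : ∫⁻ x, ENNReal.ofReal (v x) ∂μ < ⊤) :
    ∀ ε : ℝ, 0 < ε →
      ∃ (n : ℕ) (s : Fin n → X → ℝ) (ν : Fin n → Measure X),
        (∀ i, Measurable (s i)) ∧
        (∀ i, ∃ c : ℝ, ∀ x, |s i x| ≤ c * v x) ∧
        (∀ i, ∫⁻ x, ENNReal.ofReal (v x) ∂(ν i) < ⊤) ∧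
        ∀ g : X → ℝ, Measurable g → (∀ x, |g x| ≤ v x) →
          ∀ x, |(∫ y, (∫ z, g z ∂(Phat y)) ∂(Phat x))
                  - ∑ i, s i x * ∫ y, g y ∂(ν i)| ≤ ε * v x := by
  intro ε hε
  have : IsFiniteMeasure μ :=
    ⟨by simpa using (lintegral_mono fun x => ENNReal.one_le_ofReal.2 (hv x)).trans_lt hμv⟩
  let κ : Kernel X X := ⟨Phat, Measure.measurable_of_measurable_coe _ hPmeas⟩
  have hκμ : ∀ x, κ x ≤ μ := fun x => Measure.le_iff.2 (hdom x)
  have : IsFiniteKernel κ := ⟨⟨μ univ, measure_lt_top _ _, fun x => hκμ x univ⟩⟩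
  obtain ⟨n, c, A, B, hA, hB, happrox⟩ := exists_abs_integral_kernel_sub_sum_le (μ := μ) hκμ
    hvmeas.ennreal_ofReal hμv.ne hε
  refine ⟨n, fun i x => c i * (Phat x (A i)).toReal, fun i => μ.restrict (B i),
    fun i => (hPmeas _ (hA i)).ennreal_toReal.const_mul _,
    fun i => ⟨|c i| * μ.real univ, fun x => ?_⟩,
    fun i => (lintegral_mono' Measure.restrict_le_self le_rfl).trans_lt hμv, fun g hg hgv x => ?_⟩
  · have hPA : (Phat x (A i)).toReal ≤ μ.real univ := ENNReal.toReal_mono (measure_ne_top μ _)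
      ((hdom x _ (hA i)).trans (measure_mono (subset_univ _)))
    calc |c i * (Phat x (A i)).toReal| ≤ |c i| * μ.real univ := by
          rw [abs_mul, abs_of_nonneg ENNReal.toReal_nonneg]; gcongr
      _ ≤ |c i| * μ.real univ * v x := le_mul_of_one_le_right (by positivity) (hv x)
  · have hgw : ∀ z, ‖g z‖ₑ ≤ ENNReal.ofReal (v z) := fun z => by
      rw [Real.enorm_eq_ofReal_abs]; exact ENNReal.ofReal_le_ofReal (hgv z)
    exact (happrox g hg hgw (κ x) (hκμ x)).trans (le_mul_of_one_le_right hε.le (hv x))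
end

section
/- Let P be a Markov kernel admitting for each F in the relevant class a maximal eigenvalue λ(F) = e^{Λ(F)} with strictly positive eigenfunction f̌ = e^{F̌} solving P_f f̌ = λ(F) f̌ (the multiplicative Poisson equation H(F̌) = -F + Λ(F)). Define the twisted kernel P̌_{f̌}(x,A) = (∫_A P(x,dy) f̌(y)) / (P f̌(x)). Then P̌_{f̌} is a Markov transition kernel, and its eigenvalue functional satisfies the shift identity Λ̌(G) = Λ(F + G) − Λ(F) for all G in the class, via the similarity relation P̌_{f̌} = λ(F)^{-1} I_{f̌}^{-1} P_f I_{f̌}. -/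
open MeasureTheory ProbabilityTheory Filter
open scoped ENNReal

/-- Iterates of the scaled semigroup `Q_g = e^{G(x)} Q(x,dy)` applied to a weight
function `w` (in `ℝ≥0∞` to avoid integrability side conditions). -/
noncomputable def scIterM {X : Type*} [MeasurableSpace X] (Q : X → Measure X)
    (G w : X → ℝ) : ℕ → X → ℝ≥0∞
  | 0 => fun x => ENNReal.ofReal (w x)
  | n + 1 => fun x =>
      ENNReal.ofReal (Real.exp (G x)) * ∫⁻ y, scIterM Q G w n y ∂(Q x)

/-- The spectral radius of the scaled semigroup `{Q_g^n}` in `L∞^w`. -/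
noncomputable def specRadM {X : Type*} [MeasurableSpace X] (Q : X → Measure X)
    (G w : X → ℝ) : ℝ≥0∞ :=
  Filter.limsup
    (fun n : ℕ => (⨆ x, scIterM Q G w n x / ENNReal.ofReal (w x)) ^ ((1 : ℝ) / n))
    Filter.atTop

/-!
Since `f̌ > 0`, each `P̌(x, ·)` is the exponential tilt of `P(x, ·)` by `log f̌`, hence a
probability measure. The eigen-equation `e^F · P f̌ = λ f̌` turns the definition of `P̌` into the
similarity `λ I_{f̌} P̌_g = P_{fg} I_{f̌}`. Iterating it gives
`P_{fg}^n v = λ^n f̌ · P̌_g^n (v / f̌)`, so the weighted sup-norms of the two semigroups differ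
by exactly `λ^n`, whose `n`-th root `λ` factors out of the limsup.
-/

open Real

lemma MeasureTheory.Measure.tilted_log_eq_withDensity {α : Type*} [MeasurableSpace α]
    (μ : Measure α) {h : α → ℝ} (hh : ∀ x, 0 < h x) :
    μ.tilted (fun x => log (h x))
      = μ.withDensity (fun x => ENNReal.ofReal (h x / ∫ y, h y ∂μ)) := by
  simp only [Measure.tilted, exp_log (hh _)]

lemma MeasureTheory.lintegral_withDensity_div_integral {α : Type*} [MeasurableSpace α]
    (μ : Measure α) {h : α → ℝ} (hh : ∀ x, 0 < h x) (hμh : 0 < ∫ y, h y ∂μ) (φ : α → ℝ≥0∞) :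
    ∫⁻ y, φ y ∂μ.withDensity (fun x => ENNReal.ofReal (h x / ∫ y, h y ∂μ))
      = (ENNReal.ofReal (∫ y, h y ∂μ))⁻¹ * ∫⁻ y, ENNReal.ofReal (h y) * φ y ∂μ := by
  rw [← Measure.tilted_log_eq_withDensity μ hh, lintegral_tilted,
    ← lintegral_const_mul' _ _ (ENNReal.inv_ne_top.mpr (ENNReal.ofReal_pos.mpr hμh).ne')]
  simp only [exp_log (hh _), ENNReal.ofReal_div_of_pos hμh]
  refine lintegral_congr fun y => ?_
  rw [div_eq_mul_inv]
  ring

lemma ENNReal.limsup_pow_mul_rpow_one_div (L : ℝ≥0∞) (hL : L ≠ ⊤) (a : ℕ → ℝ≥0∞) :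
    limsup (fun n : ℕ => (L ^ n * a n) ^ ((1 : ℝ) / n)) atTop
      = L * limsup (fun n : ℕ => a n ^ ((1 : ℝ) / n)) atTop := by
  rw [← ENNReal.limsup_const_mul_of_ne_top hL]
  refine limsup_congr (eventually_ne_atTop 0 |>.mono fun n hn => ?_)
  rw [ENNReal.mul_rpow_of_nonneg _ _ (by positivity), one_div, ENNReal.pow_rpow_inv_natCast hn]

section Conjugation

variable {X : Type*} [MeasurableSpace X] {Q Q' : X → Measure X} {G G' w w' : X → ℝ}
  {H : X → ℝ≥0∞} {L : ℝ≥0∞}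

lemma scIterM_eq_pow_mul_of_conj (hL : L ≠ ⊤)
    (hw : ∀ x, ENNReal.ofReal (w x) = H x * ENNReal.ofReal (w' x))
    (hconj : ∀ x (φ : X → ℝ≥0∞), ENNReal.ofReal (exp (G x)) * ∫⁻ y, H y * φ y ∂Q x
      = L * H x * (ENNReal.ofReal (exp (G' x)) * ∫⁻ y, φ y ∂Q' x)) (n : ℕ) (x : X) :
    scIterM Q G w n x = L ^ n * H x * scIterM Q' G' w' n x := by
  induction n generalizing x with
  | zero => simp [scIterM, hw]
  | succ n ih =>
    simp only [scIterM, ih, mul_assoc, lintegral_const_mul' _ _ (ENNReal.pow_ne_top hL)]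
    rw [mul_left_comm, hconj, pow_succ]
    ring

lemma specRadM_eq_mul_of_conj (hH₀ : ∀ x, H x ≠ 0) (hH : ∀ x, H x ≠ ⊤) (hL : L ≠ ⊤)
    (hw : ∀ x, ENNReal.ofReal (w x) = H x * ENNReal.ofReal (w' x))
    (hconj : ∀ x (φ : X → ℝ≥0∞), ENNReal.ofReal (exp (G x)) * ∫⁻ y, H y * φ y ∂Q x
      = L * H x * (ENNReal.ofReal (exp (G' x)) * ∫⁻ y, φ y ∂Q' x)) :
    specRadM Q G w = L * specRadM Q' G' w' := by
  have hsup (n : ℕ) : ⨆ x, scIterM Q G w n x / ENNReal.ofReal (w x)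
      = L ^ n * ⨆ x, scIterM Q' G' w' n x / ENNReal.ofReal (w' x) := by
    rw [ENNReal.mul_iSup]
    refine iSup_congr fun x => ?_
    rw [scIterM_eq_pow_mul_of_conj hL hw hconj, hw, mul_comm (L ^ n), mul_assoc,
      ENNReal.mul_div_mul_left _ _ (hH₀ x) (hH x), mul_div_assoc]
  simp only [specRadM, hsup, ENNReal.limsup_pow_mul_rpow_one_div L hL]

end Conjugation

theorem stmt13_general {X : Type*} [MeasurableSpace X]
    (P : Kernel X X) [IsMarkovKernel P]
    (v : X → ℝ)
    (F : X → ℝ)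
    (fcheck : X → ℝ) (hfcpos : ∀ x, 0 < fcheck x)
    (hint : ∀ x, Integrable fcheck (P x))
    (lam : ℝ) (hlam : 0 < lam)
    (heig : ∀ x, Real.exp (F x) * ∫ y, fcheck y ∂(P x) = lam * fcheck x)
    (Pcheck : X → Measure X)
    (hPcheck : ∀ x, Pcheck x = (P x).withDensity
        (fun y => ENNReal.ofReal (fcheck y / ∫ z, fcheck z ∂(P x)))) :
    (∀ x, IsProbabilityMeasure (Pcheck x)) ∧
      ∀ G : X → ℝ, Measurable G →
        specRadM Pcheck G (fun x => v x / fcheck x)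
          = specRadM (fun x => (P x : Measure X)) (fun x => F x + G x) v
            / ENNReal.ofReal lam := by
  have hmass (x : X) : 0 < ∫ y, fcheck y ∂(P x) :=
    pos_of_mul_pos_right ((heig x).symm ▸ mul_pos hlam (hfcpos x)) (exp_pos _).le
  refine ⟨fun x => ?_, fun G _ => ?_⟩
  · rw [hPcheck x, ← Measure.tilted_log_eq_withDensity _ hfcpos]
    exact isProbabilityMeasure_tilted (by simpa only [exp_log (hfcpos _)] using hint x)
  have hscale (x : X) : ENNReal.ofReal lam * ENNReal.ofReal (fcheck x)
      * ENNReal.ofReal (exp (G x)) * (ENNReal.ofReal (∫ y, fcheck y ∂(P x)))⁻¹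
      = ENNReal.ofReal (exp (F x + G x)) := by
    have := hfcpos x
    rw [← ENNReal.ofReal_inv_of_pos (hmass x), ← ENNReal.ofReal_mul hlam.le,
      ← ENNReal.ofReal_mul (by positivity), ← ENNReal.ofReal_mul (by positivity), exp_add,
      ← heig x]
    congr 1
    field_simp [(hmass x).ne']
  rw [ENNReal.eq_div_iff (ENNReal.ofReal_pos.mpr hlam).ne' ENNReal.ofReal_ne_top]
  refine (specRadM_eq_mul_of_conj (H := fun x => ENNReal.ofReal (fcheck x))
    (fun x => (ENNReal.ofReal_pos.mpr (hfcpos x)).ne') (fun _ => ENNReal.ofReal_ne_top)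
    ENNReal.ofReal_ne_top (fun x => ?_) (fun x φ => ?_)).symm
  · rw [← ENNReal.ofReal_mul (hfcpos x).le, mul_div_cancel₀ _ (hfcpos x).ne']
  · rw [hPcheck x, lintegral_withDensity_div_integral _ hfcpos (hmass x), ← hscale x]
    ring

/-- The twisted kernel `P̌_{f̌}(x,A) = (∫_A f̌ dP(x,·)) / (P f̌ (x))` associated to a
positive eigenfunction `f̌` of the scaled kernel `P_f` with eigenvalue `λ = e^{Λ(F)}`
is a Markov transition kernel, and via the similarity
`P̌_{f̌} = λ⁻¹ I_{f̌}⁻¹ P_f I_{f̌}` its eigenvalue/spectral-radius functional, computed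
in the twisted weight `v̌ = v / f̌`, satisfies the shift identity
`Λ̌(G) = Λ(F+G) − Λ(F)` (stated multiplicatively). -/
theorem stmt13 {X : Type*} [MeasurableSpace X]
    (P : Kernel X X) [IsMarkovKernel P]
    (v : X → ℝ) (hv : ∀ x, 1 ≤ v x) (hvmeas : Measurable v)
    (F : X → ℝ) (hF : Measurable F)
    (fcheck : X → ℝ) (hfc : Measurable fcheck) (hfcpos : ∀ x, 0 < fcheck x)
    (hint : ∀ x, Integrable fcheck (P x))
    (lam : ℝ) (hlam : 0 < lam)
    (heig : ∀ x, Real.exp (F x) * ∫ y, fcheck y ∂(P x) = lam * fcheck x)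
    (Pcheck : X → Measure X)
    (hPcheck : ∀ x, Pcheck x = (P x).withDensity
        (fun y => ENNReal.ofReal (fcheck y / ∫ z, fcheck z ∂(P x)))) :
    (∀ x, IsProbabilityMeasure (Pcheck x)) ∧
      ∀ G : X → ℝ, Measurable G →
        specRadM Pcheck G (fun x => v x / fcheck x)
          = specRadM (fun x => (P x : Measure X)) (fun x => F x + G x) v
            / ENNReal.ofReal lam :=
  stmt13_general P v F fcheck hfcpos hint lam hlam heig Pcheck hPcheck
end

section
/- Let P have invariant probability π and suppose the log-eigenvalue functional Λ on L∞^{W₀} is Gateaux differentiable at 0 along every F with Λ(tF) = tπ(F) + O(t²), and let Λ* be its convex dual on probability measures. If there exists B₀ < ∞ such that Λ(εF) ≤ επ(F) + ½B₀ε² for all ‖F‖_{W₀} ≤ 1 and ε ∈ [0,1], then there exists ε₀ > 0 such that Λ*(μ) ≥ ε₀ ‖μ − π‖²_{W₀} / (1 + ‖μ − π‖_{W₀}) for every probability measure μ ∈ M₁^{W₀}. -/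
open MeasureTheory

/-!
Fix a real `r` bounding `μ(G) - Λ(G)` over the unit ball of `L∞^{W₀}`. Testing this at `εF` and
combining with the quadratic bound on `Λ(εF)` gives `ε |μ(F) - π(F)| ≤ r + B ε² / 2` for
`ε ∈ [0, 1]`, hence `ε ‖μ - π‖_{W₀} ≤ r + B ε² / 2`; the choice
`ε = ‖μ - π‖_{W₀} / ((1 + B)(1 + ‖μ - π‖_{W₀}))` turns this into the claimed lower bound on `r`.
-/

lemma EReal.coe_le_iSup_coe_of_forall_le {ι : Sort*} {x : ℝ} {g : ι → ℝ}
    (h : ∀ r : ℝ, (∀ i, g i ≤ r) → x ≤ r) : (x : EReal) ≤ ⨆ i, (g i : EReal) := by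
  rw [le_iSup_iff]
  intro b hb
  induction b with
  | bot => linarith [h (x - 1) fun i => absurd (hb i) (by simp)]
  | top => exact le_top
  | coe r => exact EReal.coe_le_coe_iff.2 (h r fun i => EReal.coe_le_coe_iff.1 (hb i))

lemma le_of_forall_mul_le_add_sq {B D r : ℝ} (hB : 0 ≤ B) (hD : 0 ≤ D)
    (h : ∀ ε : ℝ, 0 ≤ ε → ε ≤ 1 → ε * D ≤ r + B * ε ^ 2 / 2) :
    1 / (2 * (1 + B)) * D ^ 2 / (1 + D) ≤ r := by
  set c := (1 + B) * (1 + D) with hc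
  have hc₀ : 0 < c := by positivity
  have hBc : B ≤ c := by nlinarith
  have hDc : D ≤ c := by nlinarith
  have hopt := h (D / c) (by positivity) (div_le_one_of_le₀ hDc hc₀.le)
  have hquad : B * (D / c) ^ 2 / 2 ≤ D ^ 2 / (2 * c) := by
    rw [div_pow, le_div_iff₀ (by positivity)]
    field_simp
    nlinarith [sq_nonneg D]
  calc 1 / (2 * (1 + B)) * D ^ 2 / (1 + D) = D / c * D - D ^ 2 / (2 * c) := by
        field_simp; ring
    _ ≤ r := by linarith

section

variable {X : Type*} [MeasurableSpace X] {W₀ F : X → ℝ} {μ π : Measure X}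
  {Λ : (X → ℝ) → ℝ} {B₀ r ε : ℝ}

lemma mul_abs_integral_sub_le
    (hB : ∀ F : X → ℝ, Measurable F → (∀ x, |F x| ≤ W₀ x) → ∀ ε : ℝ, 0 ≤ ε → ε ≤ 1 →
        Λ (fun x => ε * F x) ≤ ε * ∫ x, F x ∂π + B₀ * ε ^ 2 / 2)
    (hr : ∀ G : X → ℝ, Measurable G → (∀ x, |G x| ≤ W₀ x) → ∫ x, G x ∂μ - Λ G ≤ r)
    (hF : Measurable F) (hFW : ∀ x, |F x| ≤ W₀ x) (hε₀ : 0 ≤ ε) (hε₁ : ε ≤ 1) :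
    ε * |∫ x, F x ∂μ - ∫ x, F x ∂π| ≤ r + B₀ * ε ^ 2 / 2 := by
  have hside : ∀ G : X → ℝ, Measurable G → (∀ x, |G x| ≤ W₀ x) →
      ε * (∫ x, G x ∂μ - ∫ x, G x ∂π) ≤ r + B₀ * ε ^ 2 / 2 := by
    intro G hG hGW
    have hεG : ∀ x, |ε * G x| ≤ W₀ x := fun x => by
      rw [abs_mul, abs_of_nonneg hε₀]
      exact (mul_le_of_le_one_left (abs_nonneg _) hε₁).trans (hGW x)
    have hdual := hr _ (hG.const_mul ε) hεG
    rw [integral_const_mul] at hdual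
    linarith [hB G hG hGW ε hε₀ hε₁]
  have hpos := hside F hF hFW
  have hneg := hside (-F) hF.neg (by simpa using hFW)
  simp only [Pi.neg_apply, integral_neg] at hneg
  rcases abs_choice (∫ x, F x ∂μ - ∫ x, F x ∂π) with h | h <;> rw [h] <;> linarith

end

theorem stmt19_general {X : Type*} [MeasurableSpace X]
    (W₀ : X → ℝ) (hW₀ : ∀ x, 1 ≤ W₀ x)
    (π : Measure X)
    (Λ : (X → ℝ) → ℝ) (B₀ : ℝ)
    (hB : ∀ F : X → ℝ, Measurable F → (∀ x, |F x| ≤ W₀ x) →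
      ∀ ε : ℝ, 0 ≤ ε → ε ≤ 1 →
        Λ (fun x => ε * F x) ≤ ε * ∫ x, F x ∂π + B₀ * ε ^ 2 / 2) :
    ∃ ε₀ : ℝ, 0 < ε₀ ∧
      ∀ μ : Measure X, IsProbabilityMeasure μ → Integrable W₀ μ →
        ((ε₀ * (⨆ F : {F : X → ℝ // Measurable F ∧ ∀ x, |F x| ≤ W₀ x},
              |(∫ x, F.1 x ∂μ) - ∫ x, F.1 x ∂π|) ^ 2
            / (1 + ⨆ F : {F : X → ℝ // Measurable F ∧ ∀ x, |F x| ≤ W₀ x},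
              |(∫ x, F.1 x ∂μ) - ∫ x, F.1 x ∂π|) : ℝ) : EReal)
          ≤ ⨆ F : {F : X → ℝ // Measurable F ∧ ∀ x, |F x| ≤ W₀ x},
              (((∫ x, F.1 x ∂μ) - Λ F.1 : ℝ) : EReal) := by
  set B := max B₀ 0
  refine ⟨1 / (2 * (1 + B)), by positivity, fun μ _ _ => ?_⟩
  have : Nonempty {F : X → ℝ // Measurable F ∧ ∀ x, |F x| ≤ W₀ x} :=
    ⟨⟨0, measurable_const, fun x => by simpa using zero_le_one.trans (hW₀ x)⟩⟩
  refine EReal.coe_le_iSup_coe_of_forall_le fun r hr => ?_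
  refine le_of_forall_mul_le_add_sq (le_max_right B₀ 0)
    (Real.iSup_nonneg fun _ => abs_nonneg _) fun ε hε₀ hε₁ => ?_
  rw [Real.mul_iSup_of_nonneg hε₀]
  refine ciSup_le fun F => ?_
  calc ε * |∫ x, F.1 x ∂μ - ∫ x, F.1 x ∂π|
      ≤ r + B₀ * ε ^ 2 / 2 :=
        mul_abs_integral_sub_le hB (fun G hG hGW => hr ⟨G, hG, hGW⟩) F.2.1 F.2.2 hε₀ hε₁
    _ ≤ r + B * ε ^ 2 / 2 := by gcongr; exact le_max_left _ _

/-- A quadratic upper bound `Λ(εF) ≤ ε π(F) + ½ B₀ ε²` for the log-eigenvalue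
functional on the unit ball of `L∞^{W₀}` implies the lower bound
`Λ*(μ) ≥ ε₀ ‖μ−π‖²_{W₀} / (1 + ‖μ−π‖_{W₀})` for the convex dual, uniformly over
probability measures `μ ∈ M₁^{W₀}`. -/
theorem stmt19 {X : Type*} [MeasurableSpace X]
    (W₀ : X → ℝ) (hW₀ : ∀ x, 1 ≤ W₀ x) (hW₀meas : Measurable W₀)
    (π : Measure X) [IsProbabilityMeasure π] (hW₀π : Integrable W₀ π)
    (Λ : (X → ℝ) → ℝ) (B₀ : ℝ)
    (hB : ∀ F : X → ℝ, Measurable F → (∀ x, |F x| ≤ W₀ x) →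
      ∀ ε : ℝ, 0 ≤ ε → ε ≤ 1 →
        Λ (fun x => ε * F x) ≤ ε * ∫ x, F x ∂π + B₀ * ε ^ 2 / 2) :
    ∃ ε₀ : ℝ, 0 < ε₀ ∧
      ∀ μ : Measure X, IsProbabilityMeasure μ → Integrable W₀ μ →
        ((ε₀ * (⨆ F : {F : X → ℝ // Measurable F ∧ ∀ x, |F x| ≤ W₀ x},
              |(∫ x, F.1 x ∂μ) - ∫ x, F.1 x ∂π|) ^ 2
            / (1 + ⨆ F : {F : X → ℝ // Measurable F ∧ ∀ x, |F x| ≤ W₀ x},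
              |(∫ x, F.1 x ∂μ) - ∫ x, F.1 x ∂π|) : ℝ) : EReal)
          ≤ ⨆ F : {F : X → ℝ // Measurable F ∧ ∀ x, |F x| ≤ W₀ x},
              (((∫ x, F.1 x ∂μ) - Λ F.1 : ℝ) : EReal) :=
  stmt19_general W₀ hW₀ π Λ B₀ hB
end
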